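/- arXiv:2403.04972 — 4 statements merged into one kernel-verified Lean document; each statement's English description precedes it below -/
import Mathlib

section
/- Let S be an integrally closed domain such that char(Frac(S)) = 0 and suppose the prime integer p is a prime element of S. Then for every positive integer r the cyclotomic polynomial Φ_{p^r}(x) ∈ ℤ[x] is irreducible in S[x]. -/
open IsLocalRing

universe u v w x

noncomputable section

/-- The depth of a module with respect to an ideal: supremum of lengths of regular
sequences contained in the ideal. -/
def moduleDepth (R : Type*) [CommRing R] (I : Ideal R) (M : Type*) [AddCommGroup M]
    [Module R M] : ℕ∞ :=
  sSup {n : ℕ∞ | ∃ rs : List R, (∀ r ∈ rs, r ∈ I) ∧ RingTheory.Sequence.IsRegular M rs ∧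
    (rs.length : ℕ∞) = n}

/-- The depth of a ring with respect to an ideal. -/
def ringDepth (R : Type*) [CommRing R] (I : Ideal R) : ℕ∞ := moduleDepth R I R

/-- A Noetherian local ring is Cohen-Macaulay if its depth equals its Krull dimension. -/
def IsCohenMacaulayLocalRing (R : Type*) [CommRing R] [IsLocalRing R] : Prop :=
  IsNoetherianRing R ∧ (ringDepth R (maximalIdeal R) : WithBot ℕ∞) = ringKrullDim R

/-- A Noetherian ring is Cohen-Macaulay if its localization at every maximal ideal is
Cohen-Macaulay. -/
def IsCohenMacaulayRing (R : Type*) [CommRing R] : Prop :=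
  IsNoetherianRing R ∧ ∀ (P : Ideal R) (hP : P.IsMaximal),
    letI := hP.isPrime
    IsCohenMacaulayLocalRing (Localization.AtPrime P)

/-- A regular local ring: a Noetherian local ring whose maximal ideal is generated by
as many elements as the Krull dimension. -/
def IsRegularLocalRing' (R : Type*) [CommRing R] : Prop :=
  IsNoetherianRing R ∧ ∃ h : IsLocalRing R,
    letI := h
    ∃ s : Finset R, Ideal.span (s : Set R) = maximalIdeal R ∧
      ((s.card : ℕ∞) : WithBot ℕ∞) = ringKrullDim R

/-- A regular semi-local ring: Noetherian with finitely many maximal ideals, whose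
localization at every maximal ideal is a regular local ring. -/
def IsRegularSemiLocalRing (R : Type*) [CommRing R] : Prop :=
  IsNoetherianRing R ∧ {I : Ideal R | I.IsMaximal}.Finite ∧
    ∀ (P : Ideal R) (hP : P.IsMaximal),
      letI := hP.isPrime
      IsRegularLocalRing' (Localization.AtPrime P)

/-- A regular ring: Noetherian whose localization at every prime is regular local. -/
def IsRegularRing' (R : Type*) [CommRing R] : Prop :=
  IsNoetherianRing R ∧ ∀ (P : Ideal R) (hP : P.IsPrime),
    letI := hP
    IsRegularLocalRing' (Localization.AtPrime P)

/-- Height of a prime ideal. -/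
def idealHeight {R : Type*} [CommRing R] (P : Ideal R) (hP : P.IsPrime) : ℕ∞ :=
  Order.height (⟨P, hP⟩ : PrimeSpectrum R)

/-- The order of an element of a local ring: the largest `m` with `x ∈ 𝔪^m`. -/
def ordLocal (R : Type*) [CommRing R] [IsLocalRing R] (x : R) : ℕ∞ :=
  sSup {n : ℕ∞ | ∃ m : ℕ, (m : ℕ∞) = n ∧ x ∈ maximalIdeal R ^ m}

/-- The order of an element of a ring at a prime ideal `Q`: its order in the
localization at `Q`. -/
def ordAt {S : Type*} [CommRing S] (Q : Ideal S) (hQ : Q.IsPrime) (x : S) : ℕ∞ :=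
  letI := hQ
  ordLocal (Localization.AtPrime Q) (algebraMap S (Localization.AtPrime Q) x)

/-- `Γ_I(f, n)`: the supremum of all `m ≥ 0` such that `X^n - f` has a root in `S/I^m`. -/
def Gamma {S : Type*} [CommRing S] (I : Ideal S) (f : S) (n : ℕ) : ℕ∞ :=
  sSup {m : ℕ∞ | ∃ k : ℕ, (k : ℕ∞) = m ∧
    ∃ g : S, Ideal.Quotient.mk (I ^ k) (g ^ n) = Ideal.Quotient.mk (I ^ k) f}

/-- `Γ_{Q S_Q}(f, n)` for a prime `Q`. -/
def GammaAt {S : Type*} [CommRing S] (Q : Ideal S) (hQ : Q.IsPrime) (f : S) (n : ℕ) : ℕ∞ :=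
  letI := hQ
  Gamma (maximalIdeal (Localization.AtPrime Q))
    (algebraMap S (Localization.AtPrime Q) f) n

/-- A map of rings is `p`-unramified if it is étale in codimension one over `p`,
i.e. `S_P → R_P` is étale for every height one prime `P ⊆ S` containing `p`. -/
def PUnramifiedMap (p : ℕ) (S R : Type u) [CommRing S] [CommRing R] [Algebra S R] : Prop :=
  ∀ (P : Ideal S) (hP : P.IsPrime), (p : S) ∈ P → idealHeight P hP = 1 →
    letI := hP
    letI : Algebra (Localization.AtPrime P)
        (Localization (Algebra.algebraMapSubmonoid R P.primeCompl)) :=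
      localizationAlgebra P.primeCompl R
    Algebra.Etale (Localization.AtPrime P)
      (Localization (Algebra.algebraMapSubmonoid R P.primeCompl))

/-- A local homomorphism of (one-dimensional) local rings is tamely ramified if the residue
field extension is separable and the order of a uniformizer of the source is coprime to the
residue characteristic. -/
def IsTamelyRamifiedLocalHom (V₁ V₂ : Type*) [CommRing V₁] [CommRing V₂]
    [IsLocalRing V₁] [IsLocalRing V₂] (φ : V₁ →+* V₂) : Prop :=
  ∃ h : IsLocalHom φ,
    letI := h
    (letI : Algebra (ResidueField V₁) (ResidueField V₂) := (ResidueField.map φ).toAlgebra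
     Algebra.IsSeparable (ResidueField V₁) (ResidueField V₂)) ∧
    ∀ π : V₁, maximalIdeal V₁ = Ideal.span {π} →
      ∃ e : ℕ, ordLocal V₂ (φ π) = (e : ℕ∞) ∧ ¬ (ringChar (ResidueField V₁) ∣ e)

/-- A module-finite map of normal domains is tamely `p`-ramified if for every height one
prime `Q` of `R` containing `p`, the induced map `S_{Q ∩ S} → R_Q` is tamely ramified. -/
def TamelyPRamifiedMap (p : ℕ) (S R : Type*) [CommRing S] [CommRing R] [Algebra S R] : Prop :=
  ∀ (Q : Ideal R) (hQ : Q.IsPrime), (p : R) ∈ Q → idealHeight Q hQ = 1 →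
    letI := hQ
    letI : (Q.comap (algebraMap S R)).IsPrime := hQ.comap _
    IsTamelyRamifiedLocalHom (Localization.AtPrime (Q.comap (algebraMap S R)))
      (Localization.AtPrime Q)
      (Localization.localRingHom (Q.comap (algebraMap S R)) Q (algebraMap S R) rfl)

/-- The map from `S` to the normalization of an `S`-algebra domain `A`
(the integral closure of `A` in its fraction ring) is `p`-unramified. -/
def NormalizationPUnramified (p : ℕ) (S : Type u) [CommRing S] (A : Type u) [CommRing A]
    [Algebra S A] : Prop :=
  letI : Algebra S ↥(integralClosure A (FractionRing A)) :=
    ((algebraMap A ↥(integralClosure A (FractionRing A))).comp (algebraMap S A)).toAlgebra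
  PUnramifiedMap p S ↥(integralClosure A (FractionRing A))

/-- The map from `S` to the normalization of an `S`-algebra domain `A` is tamely
`p`-ramified. -/
def NormalizationTamelyPRamified (p : ℕ) (S : Type u) [CommRing S] (A : Type u) [CommRing A]
    [Algebra S A] : Prop :=
  letI : Algebra S ↥(integralClosure A (FractionRing A)) :=
    ((algebraMap A ↥(integralClosure A (FractionRing A))).comp (algebraMap S A)).toAlgebra
  TamelyPRamifiedMap p S ↥(integralClosure A (FractionRing A))

/-- `f ∈ S` is `p`-unramified over `n` if for some root `ω` of `X^n - f` (in a fixed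
extension `Ω` of the fraction field of `S`), the map from `S` to the normalization of
`S[ω]` is `p`-unramified. -/
def ElemPUnramified (p n : ℕ) {S : Type u} [CommRing S] (Ω : Type u) [CommRing Ω]
    [Algebra S Ω] (f : S) : Prop :=
  ∃ ω : Ω, ω ^ n = algebraMap S Ω f ∧
    NormalizationPUnramified p S ↥(Algebra.adjoin S {ω})

/-- `f ∈ S` is tamely `p`-ramified over `n`. -/
def ElemTamelyPRamified (p n : ℕ) {S : Type u} [CommRing S] (Ω : Type u) [CommRing Ω]
    [Algebra S Ω] (f : S) : Prop :=
  ∃ ω : Ω, ω ^ n = algebraMap S Ω f ∧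
    NormalizationTamelyPRamified p S ↥(Algebra.adjoin S {ω})

/-- An element `x` of a ring is square free if `Q S_Q = x S_Q` for every height one
prime `Q` containing `x`. -/
def IsSquarefreeElem {A : Type*} [CommRing A] (x : A) : Prop :=
  ∀ (Q : Ideal A) (hQ : Q.IsPrime), x ∈ Q → idealHeight Q hQ = 1 →
    Ideal.map (algebraMap A (Localization.AtPrime Q)) Q =
      Ideal.span {algebraMap A (Localization.AtPrime Q) x}

/-- A canonical element of `K/L` in `S` (with respect to exponent `n`): a nonzero element
of `S` which is an `n`-th power in `K` but not in `L` (i.e. represents a nontrivial coset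
of the Kummer subgroup) and whose order at each of its prime divisors is at most `n`. -/
def IsCanonicalElement (S L K : Type*) [CommRing S] [CommRing L] [CommRing K]
    [Algebra S L] [Algebra S K] (n : ℕ) (f : S) : Prop :=
  f ≠ 0 ∧ (∃ y : K, y ^ n = algebraMap S K f) ∧ (¬ ∃ y : L, y ^ n = algebraMap S L f) ∧
    ∀ q : S, Prime q → q ∣ f → ¬ (q ^ (n + 1) ∣ f)

/-- A canonical divisor of `K/L` in `S`: a (height one) prime of `S` generated by a prime
factor of some canonical element. -/
def IsCanonicalDivisor (S L K : Type*) [CommRing S] [CommRing L] [CommRing K]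
    [Algebra S L] [Algebra S K] (n : ℕ) (P : Ideal S) : Prop :=
  ∃ f q : S, IsCanonicalElement S L K n f ∧ Prime q ∧ q ∣ f ∧ P = Ideal.span {q}

/-- `S → R` is unramified at the prime `P` of `S`: for every prime `Q` of `R` lying over
`P`, `P R_Q = Q R_Q` and the induced residue field extension is finite separable. -/
def UnramifiedAtPrime (S R : Type*) [CommRing S] [CommRing R] [Algebra S R]
    (P : Ideal S) : Prop :=
  ∀ (Q : Ideal R) (hQ : Q.IsPrime), Q.comap (algebraMap S R) = P →
    letI := hQ
    letI : (Q.comap (algebraMap S R)).IsPrime := hQ.comap _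
    (Ideal.map ((algebraMap R (Localization.AtPrime Q)).comp (algebraMap S R))
        (Q.comap (algebraMap S R)) =
      Ideal.map (algebraMap R (Localization.AtPrime Q)) Q) ∧
    (letI : Algebra (ResidueField (Localization.AtPrime (Q.comap (algebraMap S R))))
        (ResidueField (Localization.AtPrime Q)) :=
      (ResidueField.map
        (Localization.localRingHom (Q.comap (algebraMap S R)) Q (algebraMap S R) rfl)).toAlgebra
     Module.Finite (ResidueField (Localization.AtPrime (Q.comap (algebraMap S R))))
        (ResidueField (Localization.AtPrime Q)) ∧
     Algebra.IsSeparable (ResidueField (Localization.AtPrime (Q.comap (algebraMap S R))))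
        (ResidueField (Localization.AtPrime Q)))

/-- A Noetherian ring `R` admits a small Cohen-Macaulay algebra if there is an injective
module-finite ring map `R → T` with `T` Cohen-Macaulay. -/
def AdmitsSmallCMAlgebra (R : Type u) [CommRing R] : Prop :=
  ∃ (T : Type u) (_ : CommRing T) (_ : Algebra R T),
    Function.Injective (algebraMap R T) ∧ Module.Finite R T ∧ IsCohenMacaulayRing T

/-- A finitely generated module `M` over a Noetherian ring is maximal Cohen-Macaulay if
for every maximal ideal `𝔪`, the localization `M_𝔪` has depth `dim R_𝔪`. -/
def IsMaximalCohenMacaulay (R : Type*) [CommRing R] (M : Type*) [AddCommGroup M]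
    [Module R M] : Prop :=
  Module.Finite R M ∧ ∀ (P : Ideal R) (hP : P.IsMaximal),
    letI := hP.isPrime
    (moduleDepth (Localization.AtPrime P) (maximalIdeal (Localization.AtPrime P))
        (LocalizedModule P.primeCompl M) : WithBot ℕ∞) =
      ringKrullDim (Localization.AtPrime P)

end

/-! Over ℤ, `Φ_{p^r}(X + 1)` is monic with non-leading coefficients divisible by `p` and
constant term `Φ_{p^r}(1) = p`. Mapped to `S`, it is therefore Eisenstein at the prime `(p)`
of `S`, as `p ∉ (p)²` for a nonzero nonunit `p` of a domain. -/

open Polynomial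

theorem Prime.notMem_span_singleton_sq {R : Type*} [CommSemiring R] [IsCancelMulZero R] {a : R}
    (ha : Prime a) : a ∉ Ideal.span {a} ^ 2 := by
  rw [Ideal.span_singleton_pow, Ideal.mem_span_singleton]
  nth_rw 2 [← pow_one a]
  rw [pow_dvd_pow_iff ha.ne_zero ha.not_isUnit]
  norm_num

namespace Polynomial

variable {R : Type*} [CommRing R]

theorem irreducible_comp_X_add_C_iff (f : R[X]) (t : R) :
    Irreducible (f.comp (X + C t)) ↔ Irreducible f := by
  rw [comp_eq_aeval, ← algEquivAevalXAddC_apply]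
  exact MulEquiv.irreducible_iff (algEquivAevalXAddC t)

theorem cyclotomic_comp_X_add_one_monic (n : ℕ) : ((cyclotomic n R).comp (X + 1)).Monic := by
  simpa using (cyclotomic.monic n R).comp_X_add_C 1

variable {p : ℕ} [Fact p.Prime]

theorem cyclotomic_prime_pow_comp_X_add_one_isEisensteinAt_of_prime [IsDomain R]
    (hp : Prime (p : R)) (n : ℕ) :
    ((cyclotomic (p ^ (n + 1)) R).comp (X + 1)).IsEisensteinAt (Ideal.span {(p : R)}) := by
  refine (cyclotomic_comp_X_add_one_monic _).isEisensteinAt_of_mem_of_notMem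
    ((Ideal.span_singleton_prime hp.ne_zero).2 hp).ne_top (fun {i} hi => ?_) ?_
  · have hmap : (cyclotomic (p ^ (n + 1)) R).comp (X + 1) =
        ((cyclotomic (p ^ (n + 1)) ℤ).comp (X + 1)).map (Int.castRingHom R) := by
      rw [Polynomial.map_comp, map_cyclotomic, Polynomial.map_add, map_X, Polynomial.map_one]
    have hweak :=
      (cyclotomic_prime_pow_comp_X_add_one_isEisensteinAt p n).isWeaklyEisensteinAt.map
        (Int.castRingHom R)
    rw [← hmap, Ideal.map_span, Set.image_singleton, map_natCast] at hweak
    exact hweak.mem hi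
  · rw [coeff_zero_eq_eval_zero, eval_comp, eval_add, eval_X, eval_one, zero_add,
      eval_one_cyclotomic_prime_pow]
    exact hp.notMem_span_singleton_sq

theorem cyclotomic_prime_pow_irreducible_of_prime [IsDomain R] (hp : Prime (p : R)) (n : ℕ) :
    Irreducible (cyclotomic (p ^ (n + 1)) R) := by
  rw [← irreducible_comp_X_add_C_iff _ 1, map_one]
  refine (cyclotomic_prime_pow_comp_X_add_one_isEisensteinAt_of_prime hp n).irreducible
    ((Ideal.span_singleton_prime hp.ne_zero).2 hp)
    (cyclotomic_comp_X_add_one_monic _).isPrimitive ?_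
  rw [natDegree_comp, ← C_1, natDegree_X_add_C, mul_one, natDegree_cyclotomic]
  exact Nat.totient_pos.2 (pow_pos (Fact.out : p.Prime).pos _)

end Polynomial

theorem cyclotomic_prime_pow_irreducible_general
    (S : Type u) [CommRing S] [IsDomain S]
    (p : ℕ) (hp : p.Prime) (hps : Prime (p : S)) (r : ℕ) (hr : 0 < r) :
    Irreducible (Polynomial.cyclotomic (p ^ r) S) := by
  have : Fact p.Prime := ⟨hp⟩
  obtain ⟨n, rfl⟩ := Nat.exists_eq_add_one_of_ne_zero hr.ne'
  exact cyclotomic_prime_pow_irreducible_of_prime hps n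

/-- If `S` is an integrally closed domain with `char (Frac S) = 0` in which the prime
integer `p` is a prime element, then the cyclotomic polynomial `Φ_{p^r}` is irreducible
over `S`. -/
theorem cyclotomic_prime_pow_irreducible
    (S : Type u) [CommRing S] [IsDomain S] [IsIntegrallyClosed S] [CharZero S]
    (p : ℕ) (hp : p.Prime) (hps : Prime (p : S)) (r : ℕ) (hr : 0 < r) :
    Irreducible (Polynomial.cyclotomic (p ^ r) S) :=
  cyclotomic_prime_pow_irreducible_general S p hp hps r hr
end

section
/- Let S be a domain and for each 1 ≤ i ≤ n let S ↪ R_i be a module-finite extension of domains, such that the tensor product R_1 ⊗_S ⋯ ⊗_S R_n is a torsion-free S-module. Fix embeddings of the R_i into a fixed algebraic closure of Frac(S) and let V be the join of the R_i, i.e. the S-subalgebra generated by the images of all the R_i. Assume that the degree over Frac(S) of the compositum Frac(R_1)⋯Frac(R_n) equals the product of the degrees [Frac(R_j) : Frac(S)] for j = 1, …, n. Then V ≅ R_1 ⊗_S ⋯ ⊗_S R_n as S-algebras. -/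
open IsLocalRing

universe u v w x

/-!
The product map `φ : ⨂ₛ Rᵢ → Ω` has image the join `V`, so it suffices that `φ` is injective.
By torsion-freeness, `⨂ₛ Rᵢ` embeds in its base change to `L = Frac(S)`, and there `φ` extends
to an `L`-algebra map `ψ` whose image is the compositum `K = L(V)`. Since
`L ⊗ₛ Rᵢ ≅ Frac(Rᵢ)`, counting dimensions gives
`dim_L (L ⊗ₛ ⨂ₛ Rᵢ) ≤ ∏ [Frac(Rᵢ) : L] = [K : L] = dim_L (image ψ)`, so `ψ` is injective.
-/

open scoped TensorProduct
open Algebra.TensorProduct (productLeftAlgHom)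

theorem LinearMap.injective_of_finrank_le_finrank_range {K V W : Type*} [DivisionRing K]
    [AddCommGroup V] [Module K V] [AddCommGroup W] [Module K W] [FiniteDimensional K V]
    (f : V →ₗ[K] W) (h : Module.finrank K V ≤ Module.finrank K (range f)) :
    Function.Injective f := by
  have := f.finrank_range_add_finrank_ker
  rw [← ker_eq_bot, ← Submodule.finrank_eq_zero]
  omega

theorem Module.finrank_piTensorProduct {R ι : Type*} [CommRing R] [Nontrivial R] [Fintype ι]
    {M : ι → Type*} [∀ i, AddCommGroup (M i)] [∀ i, Module R (M i)] [∀ i, Module.Free R (M i)]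
    [∀ i, Module.Finite R (M i)] :
    finrank R (⨂[R] i, M i) = ∏ i, finrank R (M i) := by
  classical
  rw [finrank_eq_card_basis (Basis.piTensorProduct fun i => Free.chooseBasis R (M i)),
    Fintype.card_pi]
  simp only [finrank_eq_card_chooseBasisIndex]

namespace PiTensorProduct

section

variable {R ι B : Type*} [CommRing R] [Fintype ι] {A : ι → Type*} [∀ i, CommRing (A i)]
  [∀ i, Algebra R (A i)] [CommRing B] [Algebra R B]

def prodAlgHom (f : ∀ i, A i →ₐ[R] B) : (⨂[R] i, A i) →ₐ[R] B :=
  liftAlgHom ((MultilinearMap.mkPiAlgebra R ι B).compLinearMap fun i => (f i).toLinearMap)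
    (by simp) (fun x y => by simp [Finset.prod_mul_distrib])

@[simp]
theorem prodAlgHom_tprod (f : ∀ i, A i →ₐ[R] B) (x : ∀ i, A i) :
    prodAlgHom f (tprod R x) = ∏ i, f i (x i) := by
  show lift _ (tprod R x) = _
  simp

@[simp]
theorem prodAlgHom_singleAlgHom [DecidableEq ι] (f : ∀ i, A i →ₐ[R] B) (i : ι) (a : A i) :
    prodAlgHom f (singleAlgHom i a) = f i a := by
  rw [singleAlgHom_apply, prodAlgHom_tprod, Fintype.prod_eq_single i fun j hj => by simp [hj]]
  simp

theorem prod_singleAlgHom [DecidableEq ι] (x : ∀ i, A i) :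
    ∏ i, singleAlgHom (R := R) i (x i) = tprod R x := by
  simp only [singleAlgHom_apply, ← tprod_prod, MonoidHom.mulSingle_apply,
    Finset.univ_prod_mulSingle]

theorem range_prodAlgHom (f : ∀ i, A i →ₐ[R] B) :
    (prodAlgHom f).range = Algebra.adjoin R (⋃ i, Set.range (f i)) := by
  classical
  refine le_antisymm ?_ (Algebra.adjoin_le ?_)
  · rintro _ ⟨t, rfl⟩
    change prodAlgHom f t ∈ _
    induction t using PiTensorProduct.induction_on with
    | smul_tprod r x =>
      rw [map_smul, prodAlgHom_tprod]
      exact Subalgebra.smul_mem _ (Subalgebra.prod_mem _ fun i _ =>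
        Algebra.subset_adjoin (Set.mem_iUnion_of_mem i (Set.mem_range_self (x i)))) r
    | add t₁ t₂ h₁ h₂ => rw [map_add]; exact add_mem h₁ h₂
  · simp only [Set.iUnion_subset_iff, Set.range_subset_iff]
    exact fun i a => (AlgHom.mem_range _).2 ⟨singleAlgHom i a, prodAlgHom_singleAlgHom f i a⟩

end

section BaseChange

variable {S ι : Type*} [CommRing S] [Fintype ι] {A : ι → Type*} [∀ i, CommRing (A i)]
  [∀ i, Algebra S (A i)]

theorem surjective_prodAlgHom_baseChange_singleAlgHom {L : Type*} [CommRing L] [Algebra S L]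
    [DecidableEq ι] :
    Function.Surjective (prodAlgHom (R := L) fun i =>
      Algebra.TensorProduct.map (AlgHom.id L L) (singleAlgHom (R := S) (A := A) i)) := by
  set μ := prodAlgHom (R := L) fun i =>
    Algebra.TensorProduct.map (AlgHom.id L L) (singleAlgHom (R := S) (A := A) i)
  have one_tmul_tprod_mem (x : ∀ i, A i) :
      (1 : L) ⊗ₜ[S] tprod S x ∈ LinearMap.range μ.toLinearMap := by
    refine ⟨tprod L fun i => 1 ⊗ₜ x i, ?_⟩
    simp only [μ, AlgHom.toLinearMap_apply, prodAlgHom_tprod, Algebra.TensorProduct.map_tmul,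
      map_one]
    rw [← prod_singleAlgHom, ← Algebra.TensorProduct.includeRight_apply, map_prod]
    rfl
  change Function.Surjective μ.toLinearMap
  rw [← LinearMap.range_eq_top, eq_top_iff]
  rintro z -
  induction z using TensorProduct.induction_on with
  | zero => exact zero_mem _
  | tmul l t =>
    rw [← mul_one l, ← smul_eq_mul, ← TensorProduct.smul_tmul']
    refine Submodule.smul_mem _ l ?_
    induction t using PiTensorProduct.induction_on with
    | smul_tprod r x =>
      rw [TensorProduct.tmul_smul, ← algebraMap_smul L r]
      exact Submodule.smul_mem _ _ (one_tmul_tprod_mem x)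
    | add t₁ t₂ h₁ h₂ => rw [TensorProduct.tmul_add]; exact add_mem h₁ h₂
  | add z₁ z₂ h₁ h₂ => exact add_mem h₁ h₂

theorem finrank_baseChange_le_prod_finrank_baseChange {L : Type*} [Field L] [Algebra S L]
    [∀ i, Module.Finite S (A i)] :
    Module.finrank L (L ⊗[S] (⨂[S] i, A i)) ≤ ∏ i, Module.finrank L (L ⊗[S] A i) := by
  classical
  rw [← Module.finrank_piTensorProduct]
  exact LinearMap.finrank_le_finrank_of_surjective surjective_prodAlgHom_baseChange_singleAlgHom

end BaseChange

end PiTensorProduct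

section Localization

variable {S L Ω A : Type*} [CommRing S] [Field L] [Algebra S L] [CommRing A] [Algebra S A]

theorem TensorProduct.mk_one_injective_of_isTorsionFree [IsFractionRing S L] (M : Type*)
    [AddCommGroup M] [Module S M] [Module.IsTorsionFree S M] :
    Function.Injective (TensorProduct.mk S L M 1) :=
  (IsLocalizedModule.injective_iff_isRegular (nonZeroDivisors S) _).2 fun c =>
    (isRegular_iff_mem_nonZeroDivisors.2 c.2).isSMulRegular

variable [CommRing Ω] [Algebra S Ω] [Algebra L Ω] [IsScalarTower S L Ω]

theorem range_productLeftAlgHom_ofId (f : A →ₐ[S] Ω) :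
    (productLeftAlgHom (Algebra.ofId L Ω) f).range = Algebra.adjoin L (Set.range f) := by
  refine le_antisymm ?_ (Algebra.adjoin_le ?_)
  · rintro _ ⟨z, rfl⟩
    change productLeftAlgHom (Algebra.ofId L Ω) f z ∈ _
    induction z using TensorProduct.induction_on with
    | zero => rw [map_zero]; exact zero_mem _
    | tmul l a =>
      rw [Algebra.TensorProduct.lift_tmul, Algebra.ofId_apply, ← Algebra.smul_def]
      exact Subalgebra.smul_mem _ (Algebra.subset_adjoin (Set.mem_range_self a)) l
    | add z₁ z₂ h₁ h₂ => rw [map_add]; exact add_mem h₁ h₂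
  · rintro _ ⟨a, rfl⟩
    exact (AlgHom.mem_range _).2 ⟨1 ⊗ₜ a, by simp⟩

theorem injective_productLeftAlgHom_ofId [IsFractionRing S L] {f : A →ₐ[S] Ω}
    (hf : Function.Injective f) :
    Function.Injective (productLeftAlgHom (Algebra.ofId L Ω) f) :=
  IsLocalizedModule.injective_of_map_eq (nonZeroDivisors S) (TensorProduct.mk S L A 1)
    (g := (productLeftAlgHom (Algebra.ofId L Ω) f).toLinearMap.restrictScalars S)
    fun h => congrArg _ (hf (by simpa using h))

end Localization

section FractionField

variable {S L Ω : Type*} [CommRing S] [Field L] [Algebra S L] [Field Ω] [Algebra S Ω]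
  [Algebra L Ω] [IsScalarTower S L Ω]

theorem finrank_algebraAdjoin_of_isIntegral {s : Set Ω} (hs : ∀ x ∈ s, IsIntegral S x) :
    Module.finrank L (Algebra.adjoin L s) = Module.finrank L (IntermediateField.adjoin L s) := by
  rw [← IntermediateField.adjoin_toSubalgebra_of_isAlgebraic fun x hx =>
    (hs x hx).tower_top.isAlgebraic]
  rfl

theorem finrank_baseChange_eq_finrank_adjoin_range [IsFractionRing S L] {A : Type*} [CommRing A]
    [Algebra S A] [Algebra.IsIntegral S A] {f : A →ₐ[S] Ω} (hf : Function.Injective f) :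
    Module.finrank L (L ⊗[S] A) = Module.finrank L (IntermediateField.adjoin L (Set.range f)) := by
  rw [← finrank_algebraAdjoin_of_isIntegral (S := S), ← range_productLeftAlgHom_ofId,
    ← (AlgEquiv.ofInjective _ (injective_productLeftAlgHom_ofId hf)).toLinearEquiv.finrank_eq]
  rintro _ ⟨a, rfl⟩
  exact (Algebra.IsIntegral.isIntegral a).map f

end FractionField

open scoped TensorProduct in
theorem join_iso_tensorProduct_general
    (S : Type u) [CommRing S] [IsDomain S]
    (L : Type u) [Field L] [Algebra S L] [IsFractionRing S L]
    (Ω : Type u) [Field Ω] [Algebra S Ω] [Algebra L Ω] [IsScalarTower S L Ω]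
    (n : ℕ) (R : Fin n → Type u) [∀ i, CommRing (R i)]
    [∀ i, Algebra S (R i)] [∀ i, Module.Finite S (R i)]
    (htf : ∀ (a : S) (x : ⨂[S] i, R i), a • x = 0 → a = 0 ∨ x = 0)
    (f : ∀ i, R i →ₐ[S] Ω) (hfinj : ∀ i, Function.Injective ⇑(f i))
    (hdeg : Module.finrank L ↥(IntermediateField.adjoin L (⋃ i, Set.range ⇑(f i))) =
      ∏ i, Module.finrank L ↥(IntermediateField.adjoin L (Set.range ⇑(f i)))) :
    Nonempty ((⨂[S] i, R i) ≃ₐ[S] ↥(Algebra.adjoin S (⋃ i, Set.range ⇑(f i)))) := by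
  have : Module.IsTorsionFree S (⨂[S] i, R i) := .of_smul_eq_zero htf
  set φ := PiTensorProduct.prodAlgHom f
  set ψ := productLeftAlgHom (Algebra.ofId L Ω) φ
  have isIntegral_join : ∀ x ∈ ⋃ i, Set.range (f i), IsIntegral S x := by
    simp only [Set.mem_iUnion]
    rintro _ ⟨i, a, rfl⟩
    exact (Algebra.IsIntegral.isIntegral a).map (f i)
  have hψ : Function.Injective ψ := by
    refine LinearMap.injective_of_finrank_le_finrank_range ψ.toLinearMap ?_
    calc Module.finrank L (L ⊗[S] (⨂[S] i, R i))
        ≤ ∏ i, Module.finrank L (L ⊗[S] R i) :=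
          PiTensorProduct.finrank_baseChange_le_prod_finrank_baseChange
      _ = ∏ i, Module.finrank L (IntermediateField.adjoin L (Set.range (f i))) := by
          simp only [finrank_baseChange_eq_finrank_adjoin_range (hfinj _)]
      _ = Module.finrank L (Algebra.adjoin L (⋃ i, Set.range (f i))) := by
          rw [finrank_algebraAdjoin_of_isIntegral isIntegral_join, hdeg]
      _ = Module.finrank L (LinearMap.range ψ.toLinearMap) := by
          rw [← Algebra.adjoin_adjoin_of_tower S, ← PiTensorProduct.range_prodAlgHom,
            AlgHom.coe_range, ← range_productLeftAlgHom_ofId]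
          rfl
  have hφ : Function.Injective φ := by
    have : ψ ∘ TensorProduct.mk S L _ 1 = φ := funext fun t => by simp [ψ]
    exact this ▸ hψ.comp (TensorProduct.mk_one_injective_of_isTorsionFree (L := L) _)
  exact ⟨(AlgEquiv.ofInjective φ hφ).trans
    (Subalgebra.equivOfEq _ _ (PiTensorProduct.range_prodAlgHom f))⟩

open scoped TensorProduct in
/-- If the degree of the compositum equals the product of the degrees, the join of the
`R i` inside an algebraic closure is isomorphic to their tensor product over `S`. -/
theorem join_iso_tensorProduct
    (S : Type u) [CommRing S] [IsDomain S]
    (L : Type u) [Field L] [Algebra S L] [IsFractionRing S L]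
    (Ω : Type u) [Field Ω] [Algebra S Ω] [Algebra L Ω] [IsScalarTower S L Ω]
    [IsAlgClosure L Ω]
    (n : ℕ) (R : Fin n → Type u) [∀ i, CommRing (R i)] [∀ i, IsDomain (R i)]
    [∀ i, Algebra S (R i)] [∀ i, Module.Finite S (R i)]
    (hinj : ∀ i, Function.Injective (algebraMap S (R i)))
    (htf : ∀ (a : S) (x : ⨂[S] i, R i), a • x = 0 → a = 0 ∨ x = 0)
    (f : ∀ i, R i →ₐ[S] Ω) (hfinj : ∀ i, Function.Injective ⇑(f i))
    (hdeg : Module.finrank L ↥(IntermediateField.adjoin L (⋃ i, Set.range ⇑(f i))) =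
      ∏ i, Module.finrank L ↥(IntermediateField.adjoin L (Set.range ⇑(f i)))) :
    Nonempty ((⨂[S] i, R i) ≃ₐ[S] ↥(Algebra.adjoin S (⋃ i, Set.range ⇑(f i)))) :=
  join_iso_tensorProduct_general S L Ω n R htf f hfinj hdeg
end

section
/- In the following setup, Hom_{𝔇[ω]}(J_{n,h}, 𝔇[ω]), identified with the fractional ideal (J_{n,h})^{−1} inside Frac(𝔇[ω]), is generated as a 𝔇[ω]-module by 1, q_1, …, q_{p−1}, where q_i : J_{n,h} → 𝔇[ω] is multiplication by α^{−ni}(ω − h)^i. -/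
open IsLocalRing

universe u v w x

/-- A Noetherian local ring is Gorenstein if it is Cohen-Macaulay and some maximal regular
sequence of length equal to the dimension generates an irreducible ideal. -/
def IsGorensteinLocalRing (R : Type*) [CommRing R] [IsLocalRing R] : Prop :=
  IsNoetherianRing R ∧ (ringDepth R (maximalIdeal R) : WithBot ℕ∞) = ringKrullDim R ∧
  ∃ rs : List R, (∀ r ∈ rs, r ∈ maximalIdeal R) ∧ RingTheory.Sequence.IsRegular R rs ∧
    ((rs.length : ℕ∞) : WithBot ℕ∞) = ringKrullDim R ∧
    ∀ I J : Ideal R, Ideal.ofList rs = I ⊓ J → Ideal.ofList rs = I ∨ Ideal.ofList rs = J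

/-- A Noetherian ring is Gorenstein if its localization at every maximal ideal is a
Gorenstein local ring. -/
def IsGorensteinRing (R : Type*) [CommRing R] : Prop :=
  IsNoetherianRing R ∧ ∀ (P : Ideal R) (hP : P.IsMaximal),
    letI := hP.isPrime
    IsGorensteinLocalRing (Localization.AtPrime P)

/-- `𝔇[ω] = 𝔇[X]/(X^p - f)`. -/
abbrev Dw (D : Type u) [CommRing D] (p : ℕ) (f : D) : Type u :=
  AdjoinRoot (Polynomial.X ^ p - Polynomial.C f)

/-- The element `ω - h` of `𝔇[ω]`. -/
noncomputable def omegaSubH (D : Type u) [CommRing D] (p : ℕ) (f h : D) : Dw D p f :=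
  AdjoinRoot.root _ - algebraMap D (Dw D p f) h

/-- The ideal `J_{n,h} = (ω - h, α^n)^{p-1}` of `𝔇[ω]`. -/
noncomputable def Jnh (D : Type u) [CommRing D] (p : ℕ) (f : D) (n : ℕ) (h a : D) :
    Ideal (Dw D p f) :=
  (Ideal.span {omegaSubH D p f h, (algebraMap D (Dw D p f) a) ^ n}) ^ (p - 1)

/-- The prime `P = (α, ω - h)` of `𝔇[ω]`. -/
noncomputable def Ph (D : Type u) [CommRing D] (p : ℕ) (f : D) (h a : D) : Ideal (Dw D p f) :=
  Ideal.span {algebraMap D (Dw D p f) a, omegaSubH D p f h}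

/-!
Put `τ = ω - h` and `U = α^n`. Then `𝔇[ω]` is free over `𝔇` with basis `1, τ, …, τ^(p-1)`, and
`U^(p-1)` divides `τ^p = f - h^p - p·(…)`. For `x ∈ J = (τ, U)^(p-1)` this gives `U^i ∣ τ^i x`,
which defines the `qᵢ`. Conversely, a homomorphism `ψ : J → 𝔇[ω]` is multiplication by
`c / U^(p-1)` with `c = ψ(U^(p-1))`; evaluating `ψ` on the generators `τ^j U^(p-1-j)` of `J`
gives `U^j ∣ c τ^j`, and reading off the `τ^(p-1)`-coordinate of `c τ^j` shows that the
`τ^i`-coordinate of `c` is `U^(p-1-i) dᵢ` for some `dᵢ ∈ 𝔇`. Hence `ψ = Σ dᵢ qᵢ`.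
-/

open Polynomial Module

namespace AdjoinRoot

variable {R : Type*} [CommRing R]

theorem root_X_pow_sub_C_pow (n : ℕ) (a : R) : root (X ^ n - C a) ^ n = of _ a := by
  rw [← sub_eq_zero, ← eval₂_root (X ^ n - C a), eval₂_sub, eval₂_C, eval₂_pow, eval₂_X]

noncomputable def compXAddCEquiv (f : R[X]) (c : R) :
    AdjoinRoot (f.comp (X + C c)) ≃ₐ[R] AdjoinRoot f :=
  Ideal.quotientEquivAlg _ _ (algEquivAevalXAddC (-c)) <| by
    rw [Ideal.map_span, Set.image_singleton]
    simp [← comp_eq_aeval, comp_assoc]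

theorem compXAddCEquiv_root (f : R[X]) (c : R) :
    compXAddCEquiv f c (root _) = root f - algebraMap R _ c := by
  rw [← mk_X]
  change mk f _ = _
  simp [sub_eq_add_neg]

noncomputable def powerBasisRootSub {f : R[X]} (hf : f.Monic) (c : R) :
    PowerBasis R (AdjoinRoot f) :=
  (powerBasis' (hf.comp_X_add_C c)).map (compXAddCEquiv f c)

theorem powerBasisRootSub_gen {f : R[X]} (hf : f.Monic) (c : R) :
    (powerBasisRootSub hf c).gen = root f - algebraMap R _ c :=
  compXAddCEquiv_root f c

theorem powerBasisRootSub_dim [Nontrivial R] {f : R[X]} (hf : f.Monic) (c : R) :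
    (powerBasisRootSub hf c).dim = f.natDegree := by
  rw [powerBasisRootSub, PowerBasis.map_dim, powerBasis'_dim,
    natDegree_comp_eq_of_mul_ne_zero (by simp [hf.leadingCoeff]), natDegree_X_add_C, mul_one]

end AdjoinRoot

theorem dvd_pow_of_dvd_add_pow_sub_pow {R : Type*} [CommRing R] {p : ℕ} (hp : p.Prime)
    {d x y : R} (hdp : d ∣ p) (hd : d ∣ (x + y) ^ p - y ^ p) : d ∣ x ^ p := by
  obtain ⟨r, hr⟩ := exists_add_pow_prime_eq hp x y
  rw [show x ^ p = ((x + y) ^ p - y ^ p) - p * (x * y * r) by rw [hr]; ring]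
  exact dvd_sub hd (dvd_mul_of_dvd_left hdp _)

namespace Ideal

variable {R : Type*} [CommRing R]

theorem mul_apply_comm {J : Ideal R} (ψ : J →ₗ[R] R) (x y : J) :
    (x : R) * ψ y = y * ψ x := by
  rw [← smul_eq_mul, ← map_smul, ← smul_eq_mul (y : R), ← map_smul]
  congr 1
  ext
  simp [mul_comm]

theorem exists_linearMap_mul_eq {J : Ideal R} {s y : R} (hs : IsLeftRegular s)
    (h : ∀ x ∈ J, s ∣ y * x) : ∃ φ : J →ₗ[R] R, ∀ x : J, s * φ x = y * x := by
  choose g hg using fun x : J => h x x.2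
  refine ⟨{ toFun := g, map_add' := fun x x' => hs ?_, map_smul' := fun c x => hs ?_ },
    fun x => (hg x).symm⟩
  · simp only [mul_add, ← hg, Submodule.coe_add]
  · simp only [RingHom.id_apply, smul_eq_mul, mul_left_comm s, ← hg, Submodule.coe_smul]
    ring

variable {τ U : R} {m : ℕ}

theorem pow_mul_pow_mem_span_pair_pow {j : ℕ} (hj : j ≤ m) :
    τ ^ j * U ^ (m - j) ∈ span {τ, U} ^ m := by
  have := mul_mem_mul (pow_mem_pow (subset_span (Set.mem_insert τ {U})) j)
    (pow_mem_pow (subset_span (Set.mem_insert_of_mem τ (Set.mem_singleton U))) (m - j))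
  rwa [← pow_add, Nat.add_sub_cancel' hj] at this

theorem pow_dvd_pow_mul_of_mem_span_pair_pow (hτ : U ^ (m - 1) ∣ τ ^ m) {i : ℕ} (hi : i < m)
    {x : R} (hx : x ∈ span {τ, U} ^ (m - 1)) : U ^ i ∣ τ ^ i * x := by
  suffices span {τ ^ i} * span {τ, U} ^ (m - 1) ≤ span {U ^ i} from
    mem_span_singleton.mp (this (mul_mem_mul (mem_span_singleton_self _) hx))
  rw [span_insert, ← add_eq_sup, add_pow, Finset.mul_sum, sum_eq_sup]
  refine Finset.sup_le fun j hj => (mul_mono_right mul_le_left).trans ?_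
  rw [span_singleton_pow, span_singleton_pow, span_singleton_mul_span_singleton,
    span_singleton_mul_span_singleton, span_singleton_le_span_singleton]
  have hj : j < m := by rw [Finset.mem_range] at hj; omega
  by_cases hij : i + j < m
  · exact ((pow_dvd_pow U (by omega)).mul_left _).mul_left _
  · rw [← mul_assoc, ← pow_add]
    exact ((pow_dvd_pow U (by omega)).trans (hτ.trans (pow_dvd_pow τ (by omega)))).mul_right _

theorem exists_linearMap_pow_mul_eq (hU : IsRegular U) (hτ : U ^ (m - 1) ∣ τ ^ m) :
    ∃ φ : Fin m → (↥(span {τ, U} ^ (m - 1)) →ₗ[R] R),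
      ∀ (i : Fin m) (x : ↥(span {τ, U} ^ (m - 1))),
        U ^ (i : ℕ) * φ i x = τ ^ (i : ℕ) * x := by
  choose φ hφ using fun i : Fin m => exists_linearMap_mul_eq (hU.pow i).left
    fun x hx => pow_dvd_pow_mul_of_mem_span_pair_pow hτ i.2 hx
  exact ⟨φ, hφ⟩

end Ideal

namespace Module.Basis

variable {ι D R : Type*} [CommRing D] [CommRing R] [Algebra D R]

theorem dvd_repr_of_algebraMap_dvd (b : Basis ι D R) {u : D} {x : R}
    (h : algebraMap D R u ∣ x) (i : ι) : u ∣ b.repr x i := by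
  obtain ⟨y, rfl⟩ := h
  rw [← Algebra.smul_def, map_smul, Finsupp.smul_apply, smul_eq_mul]
  exact dvd_mul_right _ _

theorem isRegular_algebraMap (b : Basis ι D R) {u : D} (hu : IsRegular u) :
    IsRegular (algebraMap D R u) := by
  have := b.isTorsionFree
  rw [← isLeftRegular_iff_isRegular]
  intro x y hxy
  exact hu.isSMulRegular (by simpa only [Algebra.smul_def] using hxy)

variable {m : ℕ} {τ : R} {u : D}

theorem dvd_repr_of_pow_dvd_mul_pow (b : Basis (Fin m) D R) (hb : ∀ i, b i = τ ^ (i : ℕ))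
    (hτ : algebraMap D R u ^ (m - 1) ∣ τ ^ m) {c : R} {i : Fin m} {j : ℕ}
    (hij : i + j = m - 1) (hc : algebraMap D R u ^ j ∣ c * τ ^ j) : u ^ j ∣ b.repr c i := by
  have hm : 0 < m := i.pos
  let last : Fin m := ⟨m - 1, by omega⟩
  -- The `τ^(m-1)`-coordinate of `c τ^j` is `b.repr c i` plus contributions of the `τ^(k+j)`
  -- with `k + j ≥ m`, which are multiples of `τ^m`.
  have hexpand :
      b.repr (c * τ ^ j) last = ∑ k, b.repr c k * b.repr (τ ^ (k + j : ℕ)) last := by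
    conv_lhs => rw [← b.sum_repr c]
    simp [Finset.sum_mul, hb, ← pow_add]
  have hrest : ∀ k ≠ i, u ^ j ∣ b.repr c k * b.repr (τ ^ (k + j : ℕ)) last := by
    intro k hk
    rcases lt_or_ge (k + j : ℕ) m with hlt | hge
    · have hne : (⟨k + j, hlt⟩ : Fin m) ≠ last :=
        fun h => hk (Fin.ext (by simp [last] at h; omega))
      rw [← hb ⟨k + j, hlt⟩, b.repr_self, Finsupp.single_eq_of_ne hne.symm, mul_zero]
      exact dvd_zero _
    · refine dvd_mul_of_dvd_right (b.dvd_repr_of_algebraMap_dvd ?_ _) _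
      rw [map_pow]
      exact (pow_dvd_pow _ (by omega)).trans (hτ.trans (pow_dvd_pow τ hge))
  have hlast : b.repr (τ ^ (i + j : ℕ)) last = 1 := by
    rw [show τ ^ (i + j : ℕ) = b last by rw [hb]; simp [last, hij], b.repr_self,
      Finsupp.single_eq_same]
  have hdvd :=
    b.dvd_repr_of_algebraMap_dvd (u := u ^ j) (x := c * τ ^ j) (by rwa [map_pow]) last
  rw [hexpand, ← Finset.add_sum_erase _ _ (Finset.mem_univ i), hlast, mul_one] at hdvd
  exact (dvd_add_left (Finset.dvd_sum fun k hk => hrest k (Finset.ne_of_mem_erase hk))).mp hdvd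

theorem exists_eq_sum_of_pow_dvd_mul_pow (b : Basis (Fin m) D R) (hb : ∀ i, b i = τ ^ (i : ℕ))
    (hτ : algebraMap D R u ^ (m - 1) ∣ τ ^ m) {c : R}
    (hc : ∀ j < m, algebraMap D R u ^ j ∣ c * τ ^ j) :
    ∃ d : Fin m → D, c = ∑ i, algebraMap D R (d i) *
      (algebraMap D R u ^ (m - 1 - i) * τ ^ (i : ℕ)) := by
  have := fun i : Fin m =>
    b.dvd_repr_of_pow_dvd_mul_pow hb hτ (i := i) (j := m - 1 - i) (by omega) (hc _ (by omega))
  choose d hd using this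
  refine ⟨d, ?_⟩
  conv_lhs => rw [← b.sum_repr c]
  refine Finset.sum_congr rfl fun i _ => ?_
  rw [hd, hb, Algebra.smul_def, map_mul, map_pow]
  ring

end Module.Basis

section HomSpanPairPow

open Ideal

variable {D R : Type*} [CommRing D] [CommRing R] [Algebra D R] {m : ℕ} {τ U : R}

theorem span_range_eq_top_of_pow_mul_eq (b : Basis (Fin m) D R) (hb : ∀ i, b i = τ ^ (i : ℕ))
    {u : D} (hu : IsRegular u) (hU : algebraMap D R u = U) (hτ : U ^ (m - 1) ∣ τ ^ m)
    (φ : Fin m → (↥(span {τ, U} ^ (m - 1)) →ₗ[R] R))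
    (hφ : ∀ (i : Fin m) (x : ↥(span {τ, U} ^ (m - 1))),
      U ^ (i : ℕ) * φ i x = τ ^ (i : ℕ) * x) :
    Submodule.span R (Set.range φ) = ⊤ := by
  subst hU
  have hUreg := b.isRegular_algebraMap hu
  refine eq_top_iff.mpr fun ψ _ => ?_
  -- `ψ` is multiplication by `ψ g / g`, where `g = U^(m-1) ∈ J` is a non-zero-divisor.
  let g : ↥(span {τ, algebraMap D R u} ^ (m - 1)) :=
    ⟨_, pow_mem_pow (subset_span (Set.mem_insert_of_mem τ (Set.mem_singleton _))) (m - 1)⟩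
  have hψ : ∀ x, algebraMap D R u ^ (m - 1) * ψ x = ψ g * x := fun x =>
    (mul_apply_comm ψ g x).trans (mul_comm _ _)
  have hc : ∀ j < m, algebraMap D R u ^ j ∣ ψ g * τ ^ j := by
    intro j hj
    let x : ↥(span {τ, algebraMap D R u} ^ (m - 1)) :=
      ⟨_, pow_mul_pow_mem_span_pair_pow (m := m - 1) (j := j) (by omega)⟩
    refine ⟨ψ x, (hUreg.pow (m - 1 - j)).left ?_⟩
    calc algebraMap D R u ^ (m - 1 - j) * (ψ g * τ ^ j) = ψ g * x := by simp [x]; ring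
      _ = algebraMap D R u ^ (m - 1) * ψ x := (hψ x).symm
      _ = algebraMap D R u ^ (m - 1 - j) * (algebraMap D R u ^ j * ψ x) := by
        rw [← mul_assoc, ← pow_add, Nat.sub_add_cancel (by omega)]
  obtain ⟨d, hd⟩ := b.exists_eq_sum_of_pow_dvd_mul_pow hb hτ hc
  have hψsum : ψ = ∑ i, algebraMap D R (d i) • φ i := by
    ext x
    apply (hUreg.pow (m - 1)).left
    simp only [LinearMap.coe_sum, Finset.sum_apply, LinearMap.smul_apply, smul_eq_mul,
      Finset.mul_sum, hψ, hd, Finset.sum_mul]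
    refine Finset.sum_congr rfl fun i _ => ?_
    have hsplit := (pow_sub_mul_pow (algebraMap D R u) (show (i : ℕ) ≤ m - 1 by omega)).symm
    linear_combination (-(algebraMap D R (d i) * φ i x)) * hsplit -
      (algebraMap D R (d i) * algebraMap D R u ^ (m - 1 - i)) * hφ i x
  rw [hψsum]
  exact Submodule.sum_mem _ fun i _ => Submodule.smul_mem _ _ (Submodule.subset_span ⟨i, rfl⟩)

end HomSpanPairPow

section OmegaSubH

variable {D : Type u} [CommRing D] {p : ℕ}

noncomputable def omegaSubHBasis [Nontrivial D] (hp : p ≠ 0) (f h : D) :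
    Basis (Fin p) D (Dw D p f) :=
  (AdjoinRoot.powerBasisRootSub (monic_X_pow_sub_C f hp) h).basis.reindex
    (finCongr (by rw [AdjoinRoot.powerBasisRootSub_dim, natDegree_X_pow_sub_C]))

theorem omegaSubHBasis_apply [Nontrivial D] (hp : p ≠ 0) (f h : D) (i : Fin p) :
    omegaSubHBasis hp f h i = omegaSubH D p f h ^ (i : ℕ) := by
  simp [omegaSubHBasis, AdjoinRoot.powerBasisRootSub_gen, omegaSubH]

theorem algebraMap_dvd_omegaSubH_pow (hp : p.Prime) {f h d : D} (hdp : d ∣ p)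
    (hdf : d ∣ h ^ p - f) : algebraMap D (Dw D p f) d ∣ omegaSubH D p f h ^ p := by
  refine dvd_pow_of_dvd_add_pow_sub_pow hp (y := algebraMap D _ h) ?_ ?_
  · simpa using map_dvd (algebraMap D (Dw D p f)) hdp
  · rw [omegaSubH, sub_add_cancel, AdjoinRoot.root_X_pow_sub_C_pow, ← AdjoinRoot.algebraMap_eq,
      ← map_pow, ← map_sub]
    exact map_dvd _ (dvd_sub_comm.mp hdf)

end OmegaSubH

theorem hom_Jnh_generated_general
    (D : Type u) [CommRing D] [IsDomain D]
    (p : ℕ) (hp : p.Prime)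
    (a : D)
    (k : ℕ) (hk1 : (p : D) ∈ Ideal.span {a ^ k}) (hk2 : (p : D) ∉ Ideal.span {a ^ (k + 1)})
    (f : D)
    (n : ℕ)
    (hnle : ((n * (p - 1) : ℕ) : ℕ∞) ≤ min (Gamma (Ideal.span {a}) f p) (k : ℕ∞))
    (r : ℕ) (hr : (r : ℕ∞) = min (Gamma (Ideal.span {a}) f p) ((k : ℕ∞) + 1))
    (h : D) (hh : h ^ p - f ∈ Ideal.span {a ^ r}) :
    ∃ φ : Fin p → (↥(Jnh D p f n h a) →ₗ[Dw D p f] Dw D p f),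
      (∀ (i : Fin p) (x : ↥(Jnh D p f n h a)),
        (algebraMap D (Dw D p f) a) ^ (n * (i : ℕ)) * φ i x =
          (omegaSubH D p f h) ^ (i : ℕ) * (x : Dw D p f)) ∧
      (⊤ : Submodule (Dw D p f) (↥(Jnh D p f n h a) →ₗ[Dw D p f] Dw D p f)) =
        Submodule.span (Dw D p f) (Set.range φ) := by
  have htk : n * (p - 1) ≤ k := by exact_mod_cast hnle.trans (min_le_right _ _)
  have htr : n * (p - 1) ≤ r := by
    have : ((n * (p - 1) : ℕ) : ℕ∞) ≤ r := hr ▸ le_min (hnle.trans (min_le_left _ _))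
      ((hnle.trans (min_le_right _ _)).trans le_self_add)
    exact_mod_cast this
  have hdvd_p : a ^ (n * (p - 1)) ∣ (p : D) :=
    (pow_dvd_pow a htk).trans (Ideal.mem_span_singleton.mp hk1)
  have hu : IsRegular (a ^ n) := by
    refine IsRegular.of_ne_zero fun hzero => hk2 ?_
    have := (pow_dvd_pow a (Nat.le_mul_of_pos_right n (by have := hp.two_le; omega))).trans hdvd_p
    rw [hzero, zero_dvd_iff] at this
    exact this ▸ zero_mem _
  have hτ : (algebraMap D (Dw D p f) a ^ n) ^ (p - 1) ∣ omegaSubH D p f h ^ p := by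
    rw [← pow_mul, ← map_pow]
    exact algebraMap_dvd_omegaSubH_pow hp hdvd_p
      ((pow_dvd_pow a htr).trans (Ideal.mem_span_singleton.mp hh))
  let b := omegaSubHBasis hp.ne_zero f h
  obtain ⟨φ, hφ⟩ := Ideal.exists_linearMap_pow_mul_eq
    (map_pow (algebraMap D (Dw D p f)) a n ▸ b.isRegular_algebraMap hu) hτ
  exact ⟨φ, fun i x => by rw [pow_mul]; exact hφ i x, (span_range_eq_top_of_pow_mul_eq b
    (omegaSubHBasis_apply hp.ne_zero f h) hu (map_pow _ a n) hτ φ hφ).symm⟩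

/-- `Hom_{𝔇[ω]}(J_{n,h}, 𝔇[ω])`, identified with the fractional ideal `J_{n,h}⁻¹`, is
generated as a `𝔇[ω]`-module by `1, q₁, …, q_{p-1}`, where `qᵢ` is multiplication by
`α^{-ni}(ω - h)^i`. -/
theorem hom_Jnh_generated
    (D : Type u) [CommRing D] [IsDomain D] [IsNoetherianRing D]
    (hGor : IsGorensteinRing D)
    (p : ℕ) (hp : p.Prime) (hpu : ¬ IsUnit (p : D))
    (a : D)
    (hass : associatedPrimes D (D ⧸ Ideal.span {(p : D)}) = {Ideal.span {a}})
    (k : ℕ) (hk1 : (p : D) ∈ Ideal.span {a ^ k}) (hk2 : (p : D) ∉ Ideal.span {a ^ (k + 1)})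
    (f : D) (hfp : ¬ ∃ g : D, g ^ p = f)
    (hq : 1 ≤ Gamma (Ideal.span {a}) f p)
    (n : ℕ) (hn : 0 < n)
    (hnle : ((n * (p - 1) : ℕ) : ℕ∞) ≤ min (Gamma (Ideal.span {a}) f p) (k : ℕ∞))
    (r : ℕ) (hr : (r : ℕ∞) = min (Gamma (Ideal.span {a}) f p) ((k : ℕ∞) + 1))
    (h : D) (hh : h ^ p - f ∈ Ideal.span {a ^ r}) :
    ∃ φ : Fin p → (↥(Jnh D p f n h a) →ₗ[Dw D p f] Dw D p f),
      (∀ (i : Fin p) (x : ↥(Jnh D p f n h a)),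
        (algebraMap D (Dw D p f) a) ^ (n * (i : ℕ)) * φ i x =
          (omegaSubH D p f h) ^ (i : ℕ) * (x : Dw D p f)) ∧
      (⊤ : Submodule (Dw D p f) (↥(Jnh D p f n h a) →ₗ[Dw D p f] Dw D p f)) =
        Submodule.span (Dw D p f) (Set.range φ) :=
  hom_Jnh_generated_general D p hp a k hk1 hk2 f n hnle r hr h hh
end

section
/- In the following setup, J_{n,h} is a P-primary ideal of 𝔇[ω], where P := (α, ω − h)𝔇[ω] is the unique associated prime of the ideal p·𝔇[ω]. -/
open IsLocalRing

universe u v w x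

/-!
Put `θ = ω - h`. Then `𝔇[ω] = 𝔇[θ]` with `θ` a root of the monic `G = (X + h)^p - f`, all of whose
non-leading coefficients are divisible by `α^{n(p-1)}`: the constant one is `h^p - f`, the others
are multiples of `p`. In the basis `1, θ, …, θ^{p-1}` the ideal `J_{n,h}` is cut out by
`α^{n(p-1-i)} ∣ cᵢ` and `p·𝔇[ω]` by `p ∣ cᵢ`, so both ideals allow cancelling a factor
`d ∈ 𝔇 \ (α)`; for `p` this is because `(α)` is the only associated prime of `𝔇/(p)`, which also
makes `α` nilpotent modulo `p`. Since `𝔇[ω]/P ≅ 𝔇/(α)`, every element outside `P` is such a `d`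
plus an element of `P`, and `P` is nilpotent modulo both ideals. A non-zero-divisor plus a
nilpotent is again a non-zero-divisor, so both ideals are `P`-primary.
-/

open Polynomial

namespace Ideal

variable {R : Type*} [CommRing R]

theorem mem_of_mul_mem_of_sub_mem_radical {T : Ideal R} {s y z : R}
    (hs : ∀ z, s * z ∈ T → z ∈ T) (hys : s - y ∈ T.radical) (hyz : y * z ∈ T) : z ∈ T := by
  obtain ⟨N, hN⟩ := hys
  have hsN : ∀ m z, s ^ m * z ∈ T → z ∈ T := by
    intro m
    induction m with
    | zero => simp
    | succ m ih => exact fun z hz => ih _ (hs _ (by rwa [pow_succ', mul_assoc] at hz))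
  apply hsN N
  obtain ⟨q, hq⟩ := sub_dvd_pow_sub_pow s (s - y) N
  rw [sub_sub_cancel] at hq
  have : s ^ N * z = q * (y * z) + (s - y) ^ N * z := by linear_combination z * hq
  rw [this]
  exact T.add_mem (T.mul_mem_left _ hyz) (T.mul_mem_right _ hN)

theorem isPrimary_of_forall_exists_sub_mem {T P : Ideal R} (hP : P.IsPrime) (hTP : T ≤ P)
    (hPT : P ≤ T.radical) (hreg : ∀ y ∉ P, ∃ s, s - y ∈ P ∧ ∀ z, s * z ∈ T → z ∈ T) :
    T.IsPrimary ∧ T.radical = P := by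
  have hrad : T.radical = P := le_antisymm (hP.radical_le_iff.mpr hTP) hPT
  refine ⟨isPrimary_iff.mpr ⟨ne_top_of_le_ne_top hP.ne_top hTP, fun {x y} hxy => ?_⟩, hrad⟩
  rw [hrad]
  by_cases hy : y ∈ P
  · exact Or.inr hy
  obtain ⟨s, hsy, hs⟩ := hreg y hy
  exact Or.inl (mem_of_mul_mem_of_sub_mem_radical hs (hrad ▸ hsy) (by rwa [mul_comm]))

theorem le_radical_of_associatedPrimes_eq_singleton [IsNoetherianRing R] {I P : Ideal R}
    (h : associatedPrimes R (R ⧸ I) = {P}) : P ≤ I.radical := by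
  rw [← sInf_minimalPrimes]
  refine le_sInf fun Q hQ => ?_
  have hQ' := Module.associatedPrimes.minimalPrimes_annihilator_subset_associatedPrimes R (R ⧸ I)
    (by rwa [annihilator_quotient])
  rw [h] at hQ'
  exact hQ'.ge

theorem mem_of_mul_mem_of_associatedPrimes_eq_singleton [IsNoetherianRing R] {I P : Ideal R}
    (h : associatedPrimes R (R ⧸ I) = {P}) {d x : R} (hd : d ∉ P) (hdx : d * x ∈ I) : x ∈ I := by
  by_contra hx
  have hzd : d ∈ ⋃ Q ∈ associatedPrimes R (R ⧸ I), (Q : Set R) := by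
    rw [biUnion_associatedPrimes_eq_zero_divisors]
    refine ⟨Quotient.mk I x, by rwa [ne_eq, Quotient.eq_zero_iff_mem], ?_⟩
    rw [Algebra.smul_def, Quotient.algebraMap_eq, ← map_mul, Quotient.eq_zero_iff_mem]
    exact hdx
  rw [h] at hzd
  exact hd (by simpa using hzd)

end Ideal

namespace IsAdjoinRoot

variable {R S : Type*} [CommRing R] [CommRing S] [Algebra R S] {G : R[X]}

theorem ker_lift_mk_zero (hS : IsAdjoinRoot S G) {a : R}
    (hG : G.eval₂ (Ideal.Quotient.mk (Ideal.span {a})) 0 = 0) :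
    RingHom.ker (hS.lift (Ideal.Quotient.mk (Ideal.span {a})) 0 hG) =
      Ideal.span {algebraMap R S a, hS.root} := by
  refine le_antisymm (fun y hy => ?_) (Ideal.span_le.mpr ?_)
  · obtain ⟨g, rfl⟩ := hS.map_surjective y
    rw [RingHom.mem_ker, lift_map, eval₂_at_zero, Ideal.Quotient.eq_zero_iff_mem,
      Ideal.mem_span_singleton] at hy
    obtain ⟨e, he⟩ := hy
    rw [← X_mul_divX_add g, map_add, map_mul, hS.map_X, he, ← hS.algebraMap_apply, map_mul]
    exact Ideal.add_mem _ (Ideal.mul_mem_right _ _ (Ideal.subset_span (by simp)))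
      (Ideal.mul_mem_right _ _ (Ideal.subset_span (by simp)))
  · rintro y (rfl | rfl) <;> simp [RingHom.mem_ker]

end IsAdjoinRoot

namespace IsAdjoinRootMonic

variable {R S : Type*} [CommRing R] [CommRing S] [Algebra R S] {G : R[X]}
  (hS : IsAdjoinRootMonic S G)

theorem modByMonicHom_root_mul (z : S) :
    hS.modByMonicHom (hS.root * z) =
      X * hS.modByMonicHom z - C (hS.coeff z (G.natDegree - 1)) * G := by
  nontriviality R
  set q := hS.modByMonicHom z
  have hz : hS.root * z = hS.map (X * q) := by
    rw [map_mul, hS.map_X, hS.map_modByMonicHom]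
  have hq : ∀ j, G.natDegree ≤ j → q.coeff j = 0 := hS.coeff_apply_le z
  have hcoeff : hS.coeff z = q.coeff := rfl
  rw [hz, hS.modByMonicHom_map, hcoeff]
  refine (div_modByMonic_unique (C (q.coeff (G.natDegree - 1))) _ hS.monic ⟨by ring, ?_⟩).2
  rw [degree_eq_natDegree hS.monic.ne_zero, degree_lt_iff_coeff_zero]
  intro m hm
  have hm : G.natDegree ≤ m := by exact_mod_cast hm
  rw [coeff_sub, coeff_C_mul]
  rcases m with _ | m
  · rw [coeff_X_mul_zero, hq _ (by omega), zero_mul, sub_zero]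
  rw [coeff_X_mul]
  rcases hm.eq_or_lt with hm | hm
  · rw [← hm, hS.monic.coeff_natDegree, hm, Nat.add_sub_cancel, mul_one, sub_self]
  · rw [hq _ (by omega), coeff_eq_zero_of_natDegree_lt hm, mul_zero, sub_zero]

theorem sum_coeff_mul_root_pow (z : S) :
    ∑ i ∈ Finset.range G.natDegree, algebraMap R S (hS.coeff z i) * hS.root ^ i = z := by
  conv_rhs => rw [← hS.basis.sum_repr z]
  rw [← Fin.sum_univ_eq_sum_range]
  refine Finset.sum_congr rfl fun i _ => ?_
  rw [hS.basis_apply, hS.coeff_apply_coe, Algebra.smul_def]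

theorem coeff_algebraMap_mul (d : R) (z : S) (i : ℕ) :
    hS.coeff (algebraMap R S d * z) i = d * hS.coeff z i := by
  rw [← Algebra.smul_def, map_smul, Pi.smul_apply, smul_eq_mul]

theorem mem_span_algebraMap_iff {b : R} {z : S} :
    z ∈ Ideal.span {algebraMap R S b} ↔ ∀ i, b ∣ hS.coeff z i := by
  refine ⟨fun hz i => ?_, fun hz => ?_⟩
  · obtain ⟨y, rfl⟩ := Ideal.mem_span_singleton'.mp hz
    rw [mul_comm, coeff_algebraMap_mul]
    exact dvd_mul_right b _
  · rw [← hS.sum_coeff_mul_root_pow z]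
    refine Ideal.sum_mem _ fun i _ => ?_
    obtain ⟨e, he⟩ := hz i
    rw [he, map_mul, mul_assoc]
    exact Ideal.mul_mem_right _ _ (Ideal.subset_span rfl)

theorem root_pow_natDegree_mem_span_algebraMap {b : R}
    (hG : ∀ i < G.natDegree, b ∣ G.coeff i) :
    hS.root ^ G.natDegree ∈ Ideal.span {algebraMap R S b} := by
  have hroot : aeval hS.root (X ^ G.natDegree +
      ∑ i ∈ Finset.range G.natDegree, C (G.coeff i) * X ^ i) = 0 := by
    rw [← hS.monic.as_sum]
    exact hS.aeval_root_self
  rw [map_add, map_sum, aeval_X_pow, add_eq_zero_iff_eq_neg] at hroot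
  rw [hroot]
  refine neg_mem (Ideal.sum_mem _ fun i hi => ?_)
  obtain ⟨e, he⟩ := hG i (Finset.mem_range.mp hi)
  rw [map_mul, aeval_C, aeval_X_pow, he, map_mul, mul_assoc]
  exact Ideal.mul_mem_right _ _ (Ideal.subset_span rfl)

/-- The `∑ cᵢ θⁱ` with `b ^ (t - i) ∣ cᵢ` (truncated subtraction: no condition for `i ≥ t`), a
coordinate description of `(θ, b) ^ t`, see `mem_pow_span_root_iff`. -/
noncomputable def weightedSubmodule (b : R) (t : ℕ) : Submodule R S :=
  (Submodule.pi Set.univ fun i => Ideal.span {b ^ (t - i)}).comap hS.coeff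

variable {hS} {b : R} {s t : ℕ} {z : S}

theorem mem_weightedSubmodule :
    z ∈ hS.weightedSubmodule b t ↔ ∀ i, b ^ (t - i) ∣ hS.coeff z i := by
  simp [weightedSubmodule, Submodule.mem_pi, Ideal.mem_span_singleton]

theorem root_mul_mem_weightedSubmodule (hst : s ≤ t + 1)
    (hG : ∀ i < G.natDegree, b ^ s ∣ G.coeff i) (hz : z ∈ hS.weightedSubmodule b t) :
    hS.root * z ∈ hS.weightedSubmodule b s := by
  rw [mem_weightedSubmodule] at hz ⊢
  intro i
  by_cases hi : i < G.natDegree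
  swap
  · rw [hS.coeff_apply_le _ _ (not_lt.mp hi)]
    exact dvd_zero _
  have hcoeff : hS.coeff (hS.root * z) i = (hS.modByMonicHom (hS.root * z)).coeff i := rfl
  rw [hcoeff, modByMonicHom_root_mul, coeff_sub, coeff_C_mul]
  refine dvd_sub ?_ (((pow_dvd_pow b (Nat.sub_le s i)).trans (hG i hi)).mul_left _)
  rcases i with _ | i
  · rw [coeff_X_mul_zero]
    exact dvd_zero _
  · rw [coeff_X_mul]
    exact (pow_dvd_pow b (by omega)).trans (hz i)

theorem mul_mem_weightedSubmodule (hG : ∀ i < G.natDegree, b ^ t ∣ G.coeff i) (y : S)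
    (hz : z ∈ hS.weightedSubmodule b t) : y * z ∈ hS.weightedSubmodule b t := by
  have hpow : ∀ j, hS.root ^ j * z ∈ hS.weightedSubmodule b t := by
    intro j
    induction j with
    | zero => rwa [pow_zero, one_mul]
    | succ j ih =>
      rw [pow_succ', mul_assoc]
      exact root_mul_mem_weightedSubmodule (Nat.le_succ t) hG ih
  rw [← hS.sum_coeff_mul_root_pow y, Finset.sum_mul]
  refine Submodule.sum_mem _ fun j _ => ?_
  rw [mul_assoc, ← Algebra.smul_def]
  exact Submodule.smul_mem _ _ (hpow j)

theorem algebraMap_mul_mem_weightedSubmodule (hz : z ∈ hS.weightedSubmodule b t) :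
    algebraMap R S b * z ∈ hS.weightedSubmodule b (t + 1) := by
  rw [mem_weightedSubmodule] at hz ⊢
  intro i
  rw [coeff_algebraMap_mul]
  refine (pow_dvd_pow b (by omega : t + 1 - i ≤ t - i + 1)).trans ?_
  rw [pow_succ']
  exact mul_dvd_mul_left b (hz i)

theorem mem_weightedSubmodule_of_algebraMap_mul_mem {d : R}
    (hd : ∀ m x, b ^ m ∣ d * x → b ^ m ∣ x)
    (hz : algebraMap R S d * z ∈ hS.weightedSubmodule b t) : z ∈ hS.weightedSubmodule b t := by
  rw [mem_weightedSubmodule] at hz ⊢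
  intro i
  exact hd _ _ (by simpa only [coeff_algebraMap_mul] using hz i)

theorem mem_weightedSubmodule_of_mem_pow (hG : ∀ i < G.natDegree, b ^ t ∣ G.coeff i)
    (hz : z ∈ Ideal.span {hS.root, algebraMap R S b} ^ t) : z ∈ hS.weightedSubmodule b t := by
  induction t generalizing z with
  | zero => exact mem_weightedSubmodule.mpr fun i => by simp
  | succ t ih =>
    have hG' : ∀ i < G.natDegree, b ^ t ∣ G.coeff i :=
      fun i hi => (pow_dvd_pow b (Nat.le_succ t)).trans (hG i hi)
    rw [pow_succ] at hz
    refine Submodule.mul_induction_on hz (fun x hx y hy => ?_) (fun _ _ => Submodule.add_mem _)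
    obtain ⟨u, v, rfl⟩ := Ideal.mem_span_pair.mp hy
    have hx' := ih hG' hx
    rw [show x * (u * hS.root + v * algebraMap R S b) =
      u * (hS.root * x) + v * (algebraMap R S b * x) by ring]
    exact Submodule.add_mem _
      (mul_mem_weightedSubmodule hG u (root_mul_mem_weightedSubmodule le_rfl hG hx'))
      (mul_mem_weightedSubmodule hG v (algebraMap_mul_mem_weightedSubmodule hx'))

theorem mem_pow_of_mem_weightedSubmodule (hz : z ∈ hS.weightedSubmodule b t) :
    z ∈ Ideal.span {hS.root, algebraMap R S b} ^ t := by
  set I := Ideal.span {hS.root, algebraMap R S b}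
  rw [← hS.sum_coeff_mul_root_pow z]
  refine Ideal.sum_mem _ fun i _ => ?_
  obtain ⟨e, he⟩ := mem_weightedSubmodule.mp hz i
  have hb : algebraMap R S b ∈ I := Ideal.subset_span (by simp)
  have hroot : hS.root ∈ I := Ideal.subset_span (by simp)
  have hmem : algebraMap R S b ^ (t - i) * hS.root ^ i ∈ I ^ t := by
    refine Ideal.pow_le_pow_right (by omega : t ≤ t - i + i) ?_
    rw [pow_add]
    exact Ideal.mul_mem_mul (Ideal.pow_mem_pow hb _) (Ideal.pow_mem_pow hroot _)
  rw [he, map_mul, map_pow, mul_right_comm]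
  exact Ideal.mul_mem_right _ _ hmem

theorem mem_pow_span_root_iff (hG : ∀ i < G.natDegree, b ^ t ∣ G.coeff i) :
    z ∈ Ideal.span {hS.root, algebraMap R S b} ^ t ↔ z ∈ hS.weightedSubmodule b t :=
  ⟨mem_weightedSubmodule_of_mem_pow hG, mem_pow_of_mem_weightedSubmodule⟩

variable {a : R}

theorem isPrimary_of_algebraMap_mul_mem (ha : (Ideal.span {a}).IsPrime) (hG0 : a ∣ G.coeff 0)
    {T : Ideal S} (hTP : T ≤ Ideal.span {algebraMap R S a, hS.root})
    (hPT : Ideal.span {algebraMap R S a, hS.root} ≤ T.radical)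
    (hT : ∀ d, ¬ a ∣ d → ∀ z, algebraMap R S d * z ∈ T → z ∈ T) :
    T.IsPrimary ∧ T.radical = Ideal.span {algebraMap R S a, hS.root} := by
  have hG : G.eval₂ (Ideal.Quotient.mk (Ideal.span {a})) 0 = 0 := by
    rwa [eval₂_at_zero, Ideal.Quotient.eq_zero_iff_mem, Ideal.mem_span_singleton]
  set φ := hS.lift (Ideal.Quotient.mk (Ideal.span {a})) 0 hG
  rw [← hS.ker_lift_mk_zero hG] at hTP hPT ⊢
  refine Ideal.isPrimary_of_forall_exists_sub_mem (RingHom.ker_isPrime φ) hTP hPT fun y hy => ?_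
  obtain ⟨d, hd⟩ := Ideal.Quotient.mk_surjective (φ y)
  refine ⟨algebraMap R S d, by simp [RingHom.mem_ker, φ, hd], hT d ?_⟩
  rwa [← Ideal.mem_span_singleton, ← Ideal.Quotient.eq_zero_iff_mem, hd]

theorem isPrimary_pow_span_root_algebraMap_pow [IsDomain R] (ha : Prime a) {n t : ℕ}
    (hn : n ≠ 0) (ht : t ≠ 0) (hdeg : 0 < G.natDegree)
    (hG : ∀ i < G.natDegree, (a ^ n) ^ t ∣ G.coeff i) :
    (Ideal.span {hS.root, algebraMap R S (a ^ n)} ^ t).IsPrimary ∧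
      (Ideal.span {hS.root, algebraMap R S (a ^ n)} ^ t).radical =
        Ideal.span {algebraMap R S a, hS.root} := by
  have haP : algebraMap R S a ∈ Ideal.span {algebraMap R S a, hS.root} :=
    Ideal.subset_span (by simp)
  have hG0 : a ∣ G.coeff 0 :=
    (dvd_pow_self a (mul_ne_zero hn ht)).trans (pow_mul a n t ▸ hG 0 hdeg)
  refine isPrimary_of_algebraMap_mul_mem ((Ideal.span_singleton_prime ha.ne_zero).mpr ha)
    hG0 ?_ ?_ ?_
  · refine (Ideal.pow_le_self ht).trans (Ideal.span_le.mpr ?_)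
    rintro y (rfl | rfl)
    · exact Ideal.subset_span (by simp)
    · rw [SetLike.mem_coe, map_pow]
      exact Ideal.pow_mem_of_mem _ haP n (Nat.pos_of_ne_zero hn)
  · refine Ideal.span_le.mpr ?_
    rintro y (rfl | rfl)
    · refine ⟨n * t, ?_⟩
      rw [pow_mul, ← map_pow]
      exact Ideal.pow_mem_pow (Ideal.subset_span (by simp)) t
    · exact ⟨t, Ideal.pow_mem_pow (Ideal.subset_span (by simp)) t⟩
  · intro d hd z hdz
    rw [mem_pow_span_root_iff hG] at hdz ⊢
    refine mem_weightedSubmodule_of_algebraMap_mul_mem (fun m x hdx => ?_) hdz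
    rw [← pow_mul] at hdx ⊢
    exact ha.pow_dvd_of_dvd_mul_left _ hd hdx

theorem isPrimary_span_algebraMap (ha : (Ideal.span {a}).IsPrime) (hdeg : 0 < G.natDegree)
    (hG : ∀ i < G.natDegree, a ∣ G.coeff i) {b : R} (hab : a ∣ b)
    (hrad : a ∈ (Ideal.span {b}).radical) (hb : ∀ d x, ¬ a ∣ d → b ∣ d * x → b ∣ x) :
    (Ideal.span {algebraMap R S b}).IsPrimary ∧
      (Ideal.span {algebraMap R S b}).radical = Ideal.span {algebraMap R S a, hS.root} := by
  have haT : algebraMap R S a ∈ (Ideal.span {algebraMap R S b}).radical := by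
    obtain ⟨m, hm⟩ := hrad
    obtain ⟨e, he⟩ := Ideal.mem_span_singleton.mp hm
    refine ⟨m, ?_⟩
    rw [← map_pow, he, map_mul]
    exact Ideal.mul_mem_right _ _ (Ideal.subset_span rfl)
  refine isPrimary_of_algebraMap_mul_mem ha (hG 0 hdeg) ?_ ?_ ?_
  · rw [Ideal.span_le, Set.singleton_subset_iff]
    obtain ⟨e, rfl⟩ := hab
    rw [map_mul]
    exact Ideal.mul_mem_right _ _ (Ideal.subset_span (by simp))
  · refine Ideal.span_le.mpr ?_
    rintro y (rfl | rfl)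
    · exact haT
    · refine Ideal.mem_radical_of_pow_mem
        (Ideal.span_le.mpr ?_ (root_pow_natDegree_mem_span_algebraMap hS hG))
      exact Set.singleton_subset_iff.mpr haT
  · intro d hd z hdz
    rw [hS.mem_span_algebraMap_iff] at hdz ⊢
    exact fun i => hb d _ hd (by simpa only [coeff_algebraMap_mul] using hdz i)

end IsAdjoinRootMonic

namespace Polynomial

variable {R : Type*} [CommRing R]

theorem taylor_dvd_iff {F g : R[X]} (r : R) : taylor r F ∣ g ↔ F ∣ taylor (-r) g :=
  ⟨fun h => by simpa [taylor_taylor] using _root_.map_dvd (taylorAlgHom (-r)) h,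
    fun h => by simpa [taylor_taylor] using _root_.map_dvd (taylorAlgHom r) h⟩

theorem dvd_coeff_taylor_X_pow_sub_C {p : ℕ} (hp : p.Prime) {b r f : R} (hbp : b ∣ (p : R))
    (hbf : b ∣ r ^ p - f) {i : ℕ} (hi : i < p) : b ∣ (taylor r (X ^ p - C f)).coeff i := by
  rw [map_sub, taylor_X_pow, taylor_C, coeff_sub, coeff_X_add_C_pow, coeff_C]
  rcases Nat.eq_zero_or_pos i with rfl | hi0
  · simpa using hbf
  · rw [if_neg hi0.ne', sub_zero]
    exact (hbp.trans (Nat.cast_dvd_cast (hp.dvd_choose_self hi0.ne' hi))).mul_left _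

end Polynomial

namespace AdjoinRoot

variable {R : Type*} [CommRing R]

noncomputable def isAdjoinRootMonicTaylor {F : R[X]} (hF : F.Monic) (r : R) :
    IsAdjoinRootMonic (AdjoinRoot F) (taylor r F) where
  map := (mkₐ F).comp (taylorEquiv (-r)).toAlgHom
  map_surjective := (mk_surjective (g := F)).comp (taylorEquiv (-r)).surjective
  ker_map := by
    ext g
    simp [RingHom.mem_ker, mk_eq_zero, Ideal.mem_span_singleton, taylor_dvd_iff]
  monic := by rw [Monic, leadingCoeff_taylor]; exact hF

theorem isAdjoinRootMonicTaylor_root {F : R[X]} (hF : F.Monic) (r : R) :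
    (isAdjoinRootMonicTaylor hF r).root = root F - algebraMap R (AdjoinRoot F) r := by
  simp [isAdjoinRootMonicTaylor, IsAdjoinRoot.root, taylor_X, sub_eq_add_neg]

end AdjoinRoot

theorem Jnh_isPrimary_of_dvd {D : Type u} [CommRing D] [IsDomain D] [IsNoetherianRing D]
    {p : ℕ} (hp : p.Prime) {a : D} (ha : Prime a)
    (hass : associatedPrimes D (D ⧸ Ideal.span {(p : D)}) = {Ideal.span {a}})
    {n : ℕ} (hn : n ≠ 0) {f h : D} (hap : a ^ (n * (p - 1)) ∣ (p : D))
    (hhf : a ^ (n * (p - 1)) ∣ h ^ p - f) :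
    (Jnh D p f n h a).IsPrimary ∧ (Jnh D p f n h a).radical = Ph D p f h a ∧
      associatedPrimes (Dw D p f) ((Dw D p f) ⧸ Ideal.span {(p : Dw D p f)}) =
        {Ph D p f h a} := by
  have hp1 : p - 1 ≠ 0 := Nat.sub_ne_zero_of_lt hp.one_lt
  set hS := AdjoinRoot.isAdjoinRootMonicTaylor (monic_X_pow_sub_C f hp.ne_zero) h
  have hroot : hS.root = omegaSubH D p f h := AdjoinRoot.isAdjoinRootMonicTaylor_root _ _
  have hdeg : (taylor h (X ^ p - C f)).natDegree = p := by
    rw [natDegree_taylor, natDegree_X_pow_sub_C]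
  have hdeg0 : 0 < (taylor h (X ^ p - C f)).natDegree := by rw [hdeg]; exact hp.pos
  have hG : ∀ i < (taylor h (X ^ p - C f)).natDegree,
      a ^ (n * (p - 1)) ∣ (taylor h (X ^ p - C f)).coeff i :=
    fun i hi => dvd_coeff_taylor_X_pow_sub_C hp hap hhf (hdeg ▸ hi)
  have hJ := hS.isPrimary_pow_span_root_algebraMap_pow ha hn hp1 hdeg0
    (by simpa only [← pow_mul] using hG)
  have hpT := hS.isPrimary_span_algebraMap (b := (p : D))
    ((Ideal.span_singleton_prime ha.ne_zero).mpr ha) hdeg0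
    (fun i hi => (dvd_pow_self a (mul_ne_zero hn hp1)).trans (hG i hi))
    ((dvd_pow_self a (mul_ne_zero hn hp1)).trans hap)
    (Ideal.le_radical_of_associatedPrimes_eq_singleton hass (Ideal.mem_span_singleton_self a))
    (fun d x hd hdx => Ideal.mem_span_singleton.mp
      (Ideal.mem_of_mul_mem_of_associatedPrimes_eq_singleton hass
        (by rwa [Ideal.mem_span_singleton]) (Ideal.mem_span_singleton.mpr hdx)))
  rw [hroot, map_pow] at hJ
  rw [hroot, map_natCast] at hpT
  refine ⟨hJ.1, hJ.2, ?_⟩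
  rw [associatedPrimes.eq_singleton_of_isPrimary hpT.1, hpT.2]
  rfl

theorem Jnh_isPrimary_general
    (D : Type u) [CommRing D] [IsDomain D] [IsNoetherianRing D]
    (p : ℕ) (hp : p.Prime)
    (a : D)
    (hass : associatedPrimes D (D ⧸ Ideal.span {(p : D)}) = {Ideal.span {a}})
    (k : ℕ) (hk1 : (p : D) ∈ Ideal.span {a ^ k}) (hk2 : (p : D) ∉ Ideal.span {a ^ (k + 1)})
    (f : D)
    (n : ℕ) (hn : 0 < n)
    (hnle : ((n * (p - 1) : ℕ) : ℕ∞) ≤ min (Gamma (Ideal.span {a}) f p) (k : ℕ∞))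
    (r : ℕ) (hr : (r : ℕ∞) = min (Gamma (Ideal.span {a}) f p) ((k : ℕ∞) + 1))
    (h : D) (hh : h ^ p - f ∈ Ideal.span {a ^ r}) :
    (Jnh D p f n h a).IsPrimary ∧ (Jnh D p f n h a).radical = Ph D p f h a ∧
      associatedPrimes (Dw D p f) ((Dw D p f) ⧸ Ideal.span {(p : Dw D p f)}) =
        {Ph D p f h a} := by
  have hkn : n * (p - 1) ≤ k := by exact_mod_cast hnle.trans (min_le_right _ _)
  have hrn : n * (p - 1) ≤ r := by
    have : ((n * (p - 1) : ℕ) : ℕ∞) ≤ r := hr ▸ hnle.trans (min_le_min_left _ le_self_add)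
    exact_mod_cast this
  have hk0 : 0 < k := (Nat.mul_pos hn (Nat.sub_pos_of_lt hp.one_lt)).trans_le hkn
  have ha0 : a ≠ 0 := by
    rintro rfl
    have hp0 : (p : D) = 0 := by simpa [zero_pow hk0.ne'] using hk1
    exact hk2 (by rw [hp0]; exact Ideal.zero_mem _)
  have haP : (Ideal.span {a}).IsPrime :=
    (AssociatedPrimes.mem_iff.mp (hass ▸ Set.mem_singleton _)).isPrime
  exact Jnh_isPrimary_of_dvd hp ((Ideal.span_singleton_prime ha0).mp haP) hass hn.ne'
    ((pow_dvd_pow a hkn).trans (Ideal.mem_span_singleton.mp hk1))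
    ((pow_dvd_pow a hrn).trans (Ideal.mem_span_singleton.mp hh))

/-- `J_{n,h}` is a `P`-primary ideal, where `P = (α, ω - h)` is the unique associated prime
of `p·𝔇[ω]`. -/
theorem Jnh_isPrimary
    (D : Type u) [CommRing D] [IsDomain D] [IsNoetherianRing D]
    (hGor : IsGorensteinRing D)
    (p : ℕ) (hp : p.Prime) (hpu : ¬ IsUnit (p : D))
    (a : D)
    (hass : associatedPrimes D (D ⧸ Ideal.span {(p : D)}) = {Ideal.span {a}})
    (k : ℕ) (hk1 : (p : D) ∈ Ideal.span {a ^ k}) (hk2 : (p : D) ∉ Ideal.span {a ^ (k + 1)})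
    (f : D) (hfp : ¬ ∃ g : D, g ^ p = f)
    (hq : 1 ≤ Gamma (Ideal.span {a}) f p)
    (n : ℕ) (hn : 0 < n)
    (hnle : ((n * (p - 1) : ℕ) : ℕ∞) ≤ min (Gamma (Ideal.span {a}) f p) (k : ℕ∞))
    (r : ℕ) (hr : (r : ℕ∞) = min (Gamma (Ideal.span {a}) f p) ((k : ℕ∞) + 1))
    (h : D) (hh : h ^ p - f ∈ Ideal.span {a ^ r}) :
    (Jnh D p f n h a).IsPrimary ∧ (Jnh D p f n h a).radical = Ph D p f h a ∧
      associatedPrimes (Dw D p f) ((Dw D p f) ⧸ Ideal.span {(p : Dw D p f)}) =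
        {Ph D p f h a} :=
  Jnh_isPrimary_general D p hp a hass k hk1 hk2 f n hn hnle r hr h hh
end
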